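/- With ρ, w₀ as given by the Chevalley-type representation lemma, let L = 𝕃(K_S) where 𝕃 = {g ∈ G : ρ(g)w₀ = w₀}, and Γ_L = Γ ∩ L. Then the map θ : G/Γ_L → G/Γ × W defined by θ(gΓ_L) = (gΓ, ρ(g)w₀) is a proper map. -/

import Mathlib

/-!
The action of `G` on `W` need not be continuous, but it is on the span `M` of the orbit `ρ(G)w₀`:
continuity of `g ↦ ρ(g)v` passes from `v = w₀` to all of `M` by linearity, and the coordinates
of a basis of `M` are continuous. As `M` is closed, it suffices to treat a continuous action
of `G` on a space `X` and a point `x₀` whose `Γ`-orbit is closed and discrete.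

If `(gᵢΓ, gᵢx₀) → (g₀Γ, v)`, write `gᵢ = hᵢγᵢ` with `hᵢ → g₀` and `γᵢ ∈ Γ` (the quotient map is
open). Then `γᵢx₀ = hᵢ⁻¹gᵢx₀ → g₀⁻¹v`, so `γᵢx₀` is eventually a single point `γ₀x₀` of the
orbit, i.e. `γᵢ ∈ γ₀Γ_L`, and `gᵢΓ_L = hᵢγ₀Γ_L → g₀γ₀Γ_L`. Ultrafilters replace sequences.
-/

open Filter Topology Set MulAction

section PiSubmodule

variable {k ι : Type*} [Field k] [TopologicalSpace k] [Finite ι]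

theorem LinearMap.continuous_on_submodule_pi {E : Type*} [AddCommGroup E] [Module k E]
    [TopologicalSpace E] [ContinuousAdd E] [ContinuousSMul k E]
    {P : Submodule k (ι → k)} (l : P →ₗ[k] E) : Continuous l := by
  obtain ⟨Q, hPQ⟩ := P.exists_isCompl
  have hl : (l : P → E) = (l ∘ₗ P.projectionOnto Q hPQ) ∘ Subtype.val := by
    funext x
    simp [Submodule.projectionOnto_apply_left]
  rw [hl]
  exact (LinearMap.continuous_on_pi _).comp continuous_subtype_val

theorem Submodule.isClosed_coe_pi [IsTopologicalRing k] [T1Space k] (P : Submodule k (ι → k)) :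
    IsClosed (P : Set (ι → k)) := by
  obtain ⟨Q, hPQ⟩ := P.exists_isCompl
  rw [← Submodule.ker_projection hPQ.symm]
  exact isClosed_singleton.preimage (LinearMap.continuous_on_pi _)

end PiSubmodule

section OrbitSpan

open Matrix

variable {G k ι : Type*} [Group G] [Field k] [Fintype ι] [DecidableEq ι]
  (ρ : G →* GL ι k) (w₀ : ι → k)

def orbitSpan : Submodule k (ι → k) :=
  Submodule.span k (Set.range fun g => (ρ g : Matrix ι ι k) *ᵥ w₀)

theorem mem_orbitSpan_self : w₀ ∈ orbitSpan ρ w₀ :=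
  Submodule.subset_span ⟨1, by simp⟩

theorem mulVec_mem_orbitSpan (g : G) {v : ι → k} (hv : v ∈ orbitSpan ρ w₀) :
    (ρ g : Matrix ι ι k) *ᵥ v ∈ orbitSpan ρ w₀ := by
  refine (Submodule.span_le (p := (orbitSpan ρ w₀).comap (ρ g : Matrix ι ι k).mulVecLin)).2
    ?_ hv
  rintro _ ⟨h, rfl⟩
  exact Submodule.subset_span ⟨g * h, by simp [mulVec_mulVec]⟩

instance : SMul G (orbitSpan ρ w₀) :=
  ⟨fun g v => ⟨(ρ g : Matrix ι ι k) *ᵥ v, mulVec_mem_orbitSpan ρ w₀ g v.2⟩⟩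

@[simp]
theorem orbitSpan.coe_smul (g : G) (v : orbitSpan ρ w₀) :
    ((g • v : orbitSpan ρ w₀) : ι → k) = (ρ g : Matrix ι ι k) *ᵥ v :=
  rfl

instance : MulAction G (orbitSpan ρ w₀) where
  one_smul v := Subtype.ext (by simp)
  mul_smul g h v := Subtype.ext (by simp [mulVec_mulVec])

theorem coe_stabilizer_orbitSpan :
    (stabilizer G (⟨w₀, mem_orbitSpan_self ρ w₀⟩ : orbitSpan ρ w₀) : Set G) =
      {g | (ρ g : Matrix ι ι k) *ᵥ w₀ = w₀} := by
  ext g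
  simp [Subtype.ext_iff]

theorem orbit_orbitSpan (H : Subgroup G) :
    orbit H (⟨w₀, mem_orbitSpan_self ρ w₀⟩ : orbitSpan ρ w₀) =
      Subtype.val ⁻¹' {v | ∃ γ ∈ H, v = (ρ γ : Matrix ι ι k) *ᵥ w₀} := by
  ext v
  constructor
  · rintro ⟨γ, rfl⟩
    exact ⟨γ, γ.2, rfl⟩
  · rintro ⟨γ, hγ, hv⟩
    exact ⟨⟨γ, hγ⟩, Subtype.ext hv.symm⟩

variable [TopologicalSpace G] [TopologicalSpace k] [IsTopologicalRing k]

theorem continuous_mulVec_of_mem_orbitSpan [ContinuousMul G]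
    (hcont : Continuous fun g => (ρ g : Matrix ι ι k) *ᵥ w₀) {v : ι → k}
    (hv : v ∈ orbitSpan ρ w₀) : Continuous fun g => (ρ g : Matrix ι ι k) *ᵥ v := by
  induction hv using Submodule.span_induction with
  | mem _ hx =>
    obtain ⟨h, rfl⟩ := hx
    simpa [Function.comp_def, mulVec_mulVec] using hcont.comp (continuous_mul_const h)
  | zero =>
    simp only [mulVec_zero]
    exact continuous_const
  | add _ _ _ _ h₁ h₂ =>
    simp only [mulVec_add]
    exact h₁.add h₂
  | smul a _ _ h =>
    simp only [mulVec_smul]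
    exact h.const_smul a

theorem continuousSMul_orbitSpan [ContinuousMul G]
    (hcont : Continuous fun g => (ρ g : Matrix ι ι k) *ᵥ w₀) :
    ContinuousSMul G (orbitSpan ρ w₀) := by
  let b := Module.finBasis k (orbitSpan ρ w₀)
  have hsmul : ∀ (g : G) (v : orbitSpan ρ w₀), ((g • v : orbitSpan ρ w₀) : ι → k) =
      ∑ i, b.repr v i • (ρ g : Matrix ι ι k) *ᵥ (b i : ι → k) := by
    intro g v
    calc (ρ g : Matrix ι ι k) *ᵥ (v : ι → k)
        = (ρ g : Matrix ι ι k) *ᵥ ((∑ i, b.repr v i • b i : orbitSpan ρ w₀) : ι → k) := by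
          rw [b.sum_repr]
      _ = _ := by
          simp only [Submodule.coe_sum, Submodule.coe_smul, mulVec_sum, mulVec_smul]
  refine ⟨continuous_induced_rng.2 ?_⟩
  simp only [Function.comp_def, hsmul]
  refine continuous_finsetSum _ fun i _ => ?_
  exact ((b.coord i).continuous_on_submodule_pi.comp continuous_snd).smul
    ((continuous_mulVec_of_mem_orbitSpan ρ w₀ hcont (b i).2).comp continuous_fst)

end OrbitSpan

theorem IsDiscrete.eventually_eq_of_tendsto {X α : Type*} [TopologicalSpace X] {S : Set X}
    {l : Filter α} {u : α → X} {x : X} (hS : IsDiscrete S) (hx : x ∈ S)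
    (hu : Tendsto u l (𝓝 x)) (hmem : ∀ᶠ a in l, u a ∈ S) : ∀ᶠ a in l, u a = x :=
  tendsto_pure.1 (hS.nhdsWithin x hx ▸ tendsto_nhdsWithin_iff.2 ⟨hu, hmem⟩)

section ProperOrbitMap

variable {G X : Type*} [Group G] [MulAction G X]

theorem QuotientGroup.mk_mul_eq_of_smul_eq {Γ : Subgroup G} {x₀ : X} {g h γ : G}
    (hγ : γ ∈ Γ) (hgh : (g : G ⧸ Γ) = h) (hx : (h⁻¹ * g) • x₀ = γ • x₀) :
    ((h * γ : G) : G ⧸ (Γ ⊓ stabilizer G x₀)) = g := by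
  refine QuotientGroup.eq.2 ⟨?_, ?_⟩
  · have hhg : h⁻¹ * g ∈ Γ := QuotientGroup.eq.1 hgh.symm
    simpa [mul_assoc] using Γ.mul_mem (Γ.inv_mem hγ) hhg
  · change ((h * γ)⁻¹ * g) • x₀ = x₀
    rw [mul_inv_rev, mul_assoc, mul_smul, hx, inv_smul_smul]

variable [TopologicalSpace G] [IsTopologicalGroup G]

theorem QuotientGroup.neBot_prod_nhds_inf_principal_mk_eq (Γ : Subgroup G) {l : Filter G}
    [l.NeBot] {g₀ : G} (h : Tendsto ((↑) : G → G ⧸ Γ) l (𝓝 g₀)) :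
    (l ×ˢ 𝓝 g₀ ⊓ 𝓟 {p : G × G | (p.1 : G ⧸ Γ) = p.2}).NeBot := by
  refine inf_principal_neBot_iff.2 fun U hU => ?_
  obtain ⟨A, hA, V, hV, hAV⟩ := mem_prod_iff.1 hU
  have hVΓ : ((↑) '' V : Set (G ⧸ Γ)) ∈ 𝓝 (g₀ : G ⧸ Γ) :=
    QuotientGroup.isOpenMap_coe.image_mem_nhds hV
  obtain ⟨g, hgA, h, hhV, hhg⟩ := Filter.nonempty_of_mem (inter_mem hA (h hVΓ))
  exact ⟨(g, h), hAV ⟨hgA, hhV⟩, hhg.symm⟩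

variable [TopologicalSpace X] [ContinuousSMul G X]

theorem isProperMap_of_isClosed_of_isDiscrete_orbit (Γ : Subgroup G) (x₀ : X)
    (hclosed : IsClosed (orbit Γ x₀)) (hdisc : IsDiscrete (orbit Γ x₀))
    (ϑ : G ⧸ (Γ ⊓ stabilizer G x₀) → (G ⧸ Γ) × X)
    (hϑ : ∀ g : G, ϑ g = ((g : G ⧸ Γ), g • x₀)) : IsProperMap ϑ := by
  have hϑmk : ϑ ∘ (↑) = fun g : G => ((g : G ⧸ Γ), g • x₀) := funext hϑ
  refine isProperMap_iff_ultrafilter.2 ⟨?_, fun 𝒰 ⟨y, v⟩ hlim => ?_⟩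
  · exact (QuotientGroup.isQuotientMap_mk _).continuous_iff.2 (hϑmk ▸ by fun_prop)
  set l := comap ((↑) : G → G ⧸ (Γ ⊓ stabilizer G x₀)) 𝒰
  have : l.NeBot := 𝒰.neBot.comap_of_surj QuotientGroup.mk_surjective
  have hl : Tendsto (fun g : G => ((g : G ⧸ Γ), g • x₀)) l (𝓝 (y, v)) :=
    hϑmk ▸ hlim.comp tendsto_comap
  obtain ⟨g₀, rfl⟩ := QuotientGroup.mk_surjective y
  -- pairs `(g, h)` with `g` along `𝒰`, `gΓ = hΓ` and `h → g₀`
  set F := l ×ˢ 𝓝 g₀ ⊓ 𝓟 {p : G × G | (p.1 : G ⧸ Γ) = p.2}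
  have : F.NeBot := QuotientGroup.neBot_prod_nhds_inf_principal_mk_eq Γ hl.fst_nhds
  have hF₁ : Tendsto Prod.fst F l := tendsto_fst.mono_left inf_le_left
  have hF₂ : Tendsto Prod.snd F (𝓝 g₀) := tendsto_snd.mono_left inf_le_left
  have hsame : ∀ᶠ p in F, (p.1 : G ⧸ Γ) = p.2 := mem_inf_of_right (mem_principal_self _)
  have hconv : Tendsto (fun p : G × G => (p.2⁻¹ * p.1) • x₀) F (𝓝 (g₀⁻¹ • v)) := by
    simp_rw [mul_smul]
    exact hF₂.inv.smul (hl.snd_nhds.comp hF₁)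
  have horb : ∀ᶠ p in F, (p.2⁻¹ * p.1) • x₀ ∈ orbit Γ x₀ :=
    hsame.mono fun p hp => ⟨⟨_, QuotientGroup.eq.1 hp.symm⟩, rfl⟩
  obtain ⟨γ₀, hγ₀ : (γ₀ : G) • x₀ = g₀⁻¹ • v⟩ := hclosed.mem_of_tendsto hconv horb
  have hev : ∀ᶠ p in F, (p.2⁻¹ * p.1) • x₀ = (γ₀ : G) • x₀ := by
    rw [hγ₀]
    exact hdisc.eventually_eq_of_tendsto ⟨γ₀, hγ₀⟩ hconv horb
  refine ⟨((g₀ * γ₀ : G) : G ⧸ (Γ ⊓ stabilizer G x₀)), ?_, ?_⟩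
  · rw [hϑ, QuotientGroup.mk_mul_of_mem _ γ₀.2, mul_smul, hγ₀, smul_inv_smul]
  · have hlim' : Tendsto (fun p : G × G => (p.1 : G ⧸ (Γ ⊓ stabilizer G x₀))) F
        (𝓝 ((g₀ * γ₀ : G) : G ⧸ (Γ ⊓ stabilizer G x₀))) := by
      refine ((QuotientGroup.continuous_mk.tendsto _).comp (hF₂.mul_const _)).congr' ?_
      filter_upwards [hsame, hev] with p hp hpx
      exact QuotientGroup.mk_mul_eq_of_smul_eq γ₀.2 hp hpx
    -- the image of `F` in `G ⧸ Γ_L` is a nontrivial filter below the ultrafilter `𝒰`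
    rw [← 𝒰.unique (tendsto_comap.comp hF₁)]
    exact hlim'

end ProperOrbitMap

theorem orbit_map_proper
    {G : Type*} [Group G] [TopologicalSpace G] [IsTopologicalGroup G]
    (k : Type*) [NontriviallyNormedField k]
    (n : ℕ) (ρ : G →* GL (Fin n) k) (w₀ : Fin n → k)
    (hρcont : Continuous fun g : G => ((ρ g : Matrix (Fin n) (Fin n) k)).mulVec w₀)
    (Γ : Subgroup G)
    -- the orbit `ρ(Γ)w₀` is discrete and closed:
    (horbclosed : IsClosed {v : Fin n → k | ∃ γ ∈ Γ,
      v = ((ρ γ : Matrix (Fin n) (Fin n) k)).mulVec w₀})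
    (horbdisc : DiscreteTopology {v : Fin n → k | ∃ γ ∈ Γ,
      v = ((ρ γ : Matrix (Fin n) (Fin n) k)).mulVec w₀})
    -- `L = {g : ρ(g)w₀ = w₀}` and `Γ_L = Γ ∩ L`:
    (L : Subgroup G)
    (hL : (L : Set G) = {g : G | ((ρ g : Matrix (Fin n) (Fin n) k)).mulVec w₀ = w₀})
    -- the map `ϑ(gΓ_L) = (gΓ, ρ(g)w₀)`:
    (ϑ : G ⧸ (Γ ⊓ L) → (G ⧸ Γ) × (Fin n → k))
    (hϑ : ∀ g : G, ϑ ((g : G ⧸ (Γ ⊓ L))) =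
      ((g : G ⧸ Γ), ((ρ g : Matrix (Fin n) (Fin n) k)).mulVec w₀)) :
    ∀ Kc : Set ((G ⧸ Γ) × (Fin n → k)), IsCompact Kc → IsCompact (ϑ ⁻¹' Kc) := by
  have := continuousSMul_orbitSpan ρ w₀ hρcont
  obtain rfl : L = stabilizer G (⟨w₀, mem_orbitSpan_self ρ w₀⟩ : orbitSpan ρ w₀) :=
    SetLike.ext' (hL.trans (coe_stabilizer_orbitSpan ρ w₀).symm)
  have hmem : ∀ q, (ϑ q).2 ∈ orbitSpan ρ w₀ := fun q =>
    QuotientGroup.induction_on q fun g => by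
      rw [hϑ]
      exact Submodule.subset_span ⟨g, rfl⟩
  have hproper : IsProperMap fun q => ((ϑ q).1, (⟨(ϑ q).2, hmem q⟩ : orbitSpan ρ w₀)) :=
    isProperMap_of_isClosed_of_isDiscrete_orbit Γ _
      (orbit_orbitSpan ρ w₀ Γ ▸ horbclosed.preimage continuous_subtype_val)
      (orbit_orbitSpan ρ w₀ Γ ▸ IsDiscrete.preimage ⟨horbdisc⟩
        continuous_subtype_val.continuousOn Subtype.val_injective)
      _ fun g => by ext <;> simp [hϑ]
  exact fun Kc hKc => ((isProperMap_id.prodMap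
    (Submodule.isClosed_coe_pi _).isProperMap_subtypeVal).comp hproper).isCompact_preimage hKc
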